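/- arXiv:2507.23584 — 2 statements merged into one kernel-verified Lean document; each statement's English description precedes it below -/
import Mathlib

section
/- Let γ : I → X be locally of bounded variation, let t ∈ I be a point at which γ is not left-continuous, and let a ∈ I with a < t. Then Var(γ;(a,t]) = Var(γ;(a,t)) + d(γ(t−),γ(t)), where d(γ(t−),γ(t)) denotes the (existing) limit lim_{s↗t} d(γ(s),γ(t)); in particular Var(γ;(a,t]) > Var(γ;(a,t)) + Var(γ;{t}), so Var(γ;·) fails to be additive at t. -/
/-!
Since `X` need not be complete, pass to its completion: there a function of bounded variation has
a left limit `l` at `t`, and the variation on `(a, t]` is the variation on `(a, t)` plus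
`d(γ(t), l)`. The isometric embedding changes neither variations nor distances, so
`d(γ(s), γ(t)) → d(l, γ(t))`. This jump is positive because `γ` is not left-continuous at `t`,
while the variation on `{t}` vanishes.
-/

open Filter Topology Set
open scoped ENNReal

theorem Isometry.eVariationOn_comp {α E F : Type*} [LinearOrder α] [PseudoEMetricSpace E]
    [PseudoEMetricSpace F] {g : E → F} (hg : Isometry g) (f : α → E) (s : Set α) :
    eVariationOn (g ∘ f) s = eVariationOn f s := by
  simp only [eVariationOn, Function.comp_apply, hg.edist_eq]

theorem BoundedVariationOn.exists_tendsto_dist_left_and_eVariationOn_inter_Iic_eq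
    {α E : Type*} [LinearOrder α] [TopologicalSpace α] [OrderTopology α] [PseudoMetricSpace E]
    {f : α → E} {s : Set α} {x : α} (hf : BoundedVariationOn f s) (hx : x ∈ s)
    (hleft : (𝓝[s ∩ Iio x] x).NeBot) :
    ∃ L : ℝ, Tendsto (fun y => dist (f y) (f x)) (𝓝[s ∩ Iio x] x) (𝓝 L) ∧
      eVariationOn f (s ∩ Iic x) = eVariationOn f (s ∩ Iio x) + ENNReal.ofReal L := by
  set ι : E → UniformSpace.Completion E := (↑)
  have hι : Isometry ι := UniformSpace.Completion.coe_isometry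
  have hιf : BoundedVariationOn (ι ∘ f) s := by
    rwa [BoundedVariationOn, hι.eVariationOn_comp]
  obtain ⟨l, hl⟩ := hιf.exists_tendsto_left x
  refine ⟨dist l (ι (f x)), ?_, ?_⟩
  · simpa only [Function.comp_apply, hι.dist_eq] using hl.dist (tendsto_const_nhds (x := ι (f x)))
  · rw [← hι.eVariationOn_comp, ← hι.eVariationOn_comp,
      eVariationOn.eVariationOn_on_inter_Iic_eq_Iio_add_edist hleft hx hl, edist_comm, edist_dist,
      Function.comp_apply]

/-- If `γ` is locally of bounded variation, `t ∈ I` is a point where `γ` is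
not left-continuous, and `a ∈ I` with `a < t`, then the limit
`d(γ(t-),γ(t)) = lim_{s↗t} d(γ(s),γ(t))` exists,
`Var(γ;(a,t]) = Var(γ;(a,t)) + d(γ(t-),γ(t))`, and in particular
`Var(γ;(a,t]) > Var(γ;(a,t)) + Var(γ;{t})`. -/
theorem variation_not_additive_left {X : Type*} [MetricSpace X]
    (I : Set ℝ) (hI : I.OrdConnected) (γ : ℝ → X)
    (hγ : ∀ a ∈ I, ∀ b ∈ I, a ≤ b → eVariationOn γ (Set.Icc a b) < ⊤)
    (t : ℝ) (ht : t ∈ I)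
    (hdisc : ¬ ContinuousWithinAt γ (I ∩ Set.Iio t) t)
    (a : ℝ) (ha : a ∈ I) (hat : a < t) :
    ∃ L : ℝ,
      Tendsto (fun s => dist (γ s) (γ t)) (𝓝[I ∩ Set.Iio t] t) (𝓝 L) ∧
      eVariationOn γ (Set.Ioc a t) = eVariationOn γ (Set.Ioo a t) + ENNReal.ofReal L ∧
      eVariationOn γ (Set.Ioo a t) + eVariationOn γ ({t} : Set ℝ)
        < eVariationOn γ (Set.Ioc a t) := by
  have hbv : BoundedVariationOn γ (Ioc a t) :=
    ne_top_of_le_ne_top (hγ a ha t ht hat.le).ne (eVariationOn.mono γ Ioc_subset_Icc_self)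
  have hIoo : Ioc a t ∩ Iio t = Ioo a t := by
    ext x
    simp only [mem_inter_iff, mem_Ioc, mem_Iio, mem_Ioo]
    exact ⟨fun h => ⟨h.1.1, h.2⟩, fun h => ⟨⟨h.1, h.2.le⟩, h.2⟩⟩
  have hnhds : 𝓝[I ∩ Iio t] t = 𝓝[Ioo a t] t := by
    refine nhdsWithin_eq_nhdsWithin' (Ioi_mem_nhds hat) (Set.ext fun x => ⟨?_, ?_⟩)
    · rintro ⟨⟨-, hxt⟩, hax⟩
      exact ⟨⟨hax, hxt⟩, hax⟩
    · rintro ⟨⟨hax, hxt⟩, -⟩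
      exact ⟨⟨hI.out ha ht ⟨hax.le, hxt.le⟩, hxt⟩, hax⟩
  have hleft : (𝓝[Ioo a t] t).NeBot := right_nhdsWithin_Ioo_neBot hat
  obtain ⟨L, hL, hvar⟩ := hbv.exists_tendsto_dist_left_and_eVariationOn_inter_Iic_eq
    ⟨hat, le_rfl⟩ (hIoo ▸ hleft)
  rw [hIoo, ← hnhds] at hL
  rw [Ioc_inter_Iic, min_self, hIoo] at hvar
  have hLpos : 0 < L := by
    have : (𝓝[I ∩ Iio t] t).NeBot := hnhds ▸ hleft
    refine (ge_of_tendsto' hL fun _ => dist_nonneg).lt_of_ne fun hL0 => hdisc ?_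
    exact tendsto_iff_dist_tendsto_zero.2 (hL0 ▸ hL)
  refine ⟨L, hL, hvar, ?_⟩
  rw [eVariationOn.subsingleton γ subsingleton_singleton, add_zero, hvar]
  exact ENNReal.lt_add_right (ne_top_of_le_ne_top hbv (eVariationOn.mono γ Ioo_subset_Ioc_self))
    (ENNReal.ofReal_pos.2 hLpos).ne'
end

section
/- Let γ : I → X be locally of bounded variation with speed measure ν, Lebesgue decomposition ν = ν_ac + ν_sing with respect to Lebesgue measure λ, and metric derivative |γ̇| (defined λ-a.e.). Then for every subinterval J ⊆ I one has Var(γ;J) ≤ ∫_J |γ̇| dλ + ν_sing(J), with equality if every point of J not in the relative interior of J is a continuity point of γ. In particular, if γ is continuous, then Var(γ;J) = ∫_J |γ̇| dλ + ν_sing(J) for every subinterval J ⊆ I. -/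
open Filter Topology Set MeasureTheory

/-- `ν` is the speed measure of `γ` on the interval `I`. -/
def IsSpeedMeasure {X : Type*} [MetricSpace X] (γ : ℝ → X) (I : Set ℝ)
    (ν : Measure ℝ) : Prop :=
  ν Iᶜ = 0 ∧
  ∀ J : Set ℝ, J ⊆ I → J.OrdConnected → (∃ U : Set ℝ, IsOpen U ∧ J = U ∩ I) →
    ν J = eVariationOn γ J

/-!
`Var(γ; J) ≤ ν(J)` always, with equality when `J` is relatively open, and an endpoint of `J` at
which `γ` is continuous carries no mass; so everything reduces to identifying the absolutely
continuous part of `ν` with `|γ̇| dλ`. On a compact subinterval `[a, b]` of `I`, `ν` agrees on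
`(a, b)` with the Stieltjes measure of the variation function `V` of `γ` (extended constantly
outside `[a, b]`), whose density `V'` dominates `|γ̇|`. Conversely, for every `q` the functions
`V ± d(γ(·), γ(q))` are monotone and the derivative of `d(γ(·), γ(q))` is at most `|γ̇|`, so the
increments of `γ` are bounded by `∫ |γ̇|` plus a singular measure. Summing over partitions bounds
the increments of `V` in the same way, and Besicovitch differentiation gives `V' ≤ |γ̇|` a.e.
-/

open Function
open scoped ENNReal

namespace MeasureTheory.Measure

variable {α : Type*} {m : MeasurableSpace α} {μ ρ ν : Measure α}

theorem le_singularPart_add_add_setLIntegral [μ.HaveLebesgueDecomposition ν]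
    {f : α → ℝ≥0∞} (h : ∀ᵐ x ∂ν, μ.rnDeriv ν x ≤ ρ.rnDeriv ν x + f x)
    {s : Set α} (hs : MeasurableSet s) :
    μ s ≤ μ.singularPart ν s + ρ s + ∫⁻ x in s, f x ∂ν :=
  calc μ s = μ.singularPart ν s + ∫⁻ x in s, μ.rnDeriv ν x ∂ν := by
        conv_lhs => rw [μ.haveLebesgueDecomposition_add ν]
        rw [add_apply, withDensity_apply _ hs]
    _ ≤ μ.singularPart ν s + ∫⁻ x in s, (ρ.rnDeriv ν x + f x) ∂ν := by
        gcongr 1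
        exact lintegral_mono_ae (ae_restrict_of_ae h)
    _ ≤ μ.singularPart ν s + ρ s + ∫⁻ x in s, f x ∂ν := by
        rw [lintegral_add_left (measurable_rnDeriv ρ ν), add_assoc]
        gcongr
        exact setLIntegral_rnDeriv_le s

theorem eq_withDensity_rnDeriv_of_eq_add {μa μs : Measure α} [SigmaFinite μa] [SigmaFinite ν]
    (h : μ = μa + μs) (ha : μa ≪ ν) (hs : μs ⟂ₘ ν) :
    μa = ν.withDensity (μ.rnDeriv ν) := by
  have hμa := withDensity_rnDeriv_eq μa ν ha
  rw [← hμa]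
  exact eq_withDensity_rnDeriv (measurable_rnDeriv μa ν) hs (by rw [hμa, h, add_comm])

instance isLocallyFiniteMeasure_add [TopologicalSpace α] [IsLocallyFiniteMeasure μ]
    [IsLocallyFiniteMeasure ν] : IsLocallyFiniteMeasure (μ + ν) := by
  refine ⟨fun x => ?_⟩
  obtain ⟨s, hs, hμs⟩ := μ.finiteAt_nhds x
  obtain ⟨t, ht, hνt⟩ := ν.finiteAt_nhds x
  exact ⟨s ∩ t, inter_mem hs ht, by
    simpa using ⟨(measure_mono inter_subset_left).trans_lt hμs,
      (measure_mono inter_subset_right).trans_lt hνt⟩⟩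

theorem apply_eq_singularPart_apply [μ.HaveLebesgueDecomposition ν] {s : Set α} (hs : ν s = 0) :
    μ s = μ.singularPart ν s := by
  conv_lhs => rw [μ.haveLebesgueDecomposition_add ν]
  rw [add_apply, withDensity_absolutelyContinuous _ _ hs, add_zero]

end MeasureTheory.Measure

theorem HasDerivAt.tendsto_div_sub_nhdsGT {φ : ℝ → ℝ} {φ' x : ℝ} (hφ : HasDerivAt φ φ' x) :
    Tendsto (fun s => (φ s - φ x) / (s - x)) (𝓝[>] x) (𝓝 φ') := by
  have := (hasDerivAt_iff_tendsto_slope.1 hφ).mono_left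
    (nhdsWithin_mono x (show Ioi x ⊆ {x}ᶜ from fun s hs => ne_of_gt hs))
  exact this.congr fun s => slope_def_field φ x s

theorem HasDerivAt.le_of_tendsto_nhdsGT {φ e : ℝ → ℝ} {φ' x d : ℝ} (hφ : HasDerivAt φ φ' x)
    (he : Tendsto (fun s => e s / (s - x)) (𝓝[>] x) (𝓝 d))
    (hle : ∀ s, x < s → e s ≤ φ s - φ x) : d ≤ φ' :=
  le_of_tendsto_of_tendsto he hφ.tendsto_div_sub_nhdsGT <| eventually_nhdsWithin_of_forall
    fun s (hs : x < s) => div_le_div_of_nonneg_right (hle s hs) (sub_pos.2 hs).le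

theorem HasDerivAt.abs_le_of_tendsto_nhdsGT {φ e : ℝ → ℝ} {φ' x d : ℝ} (hφ : HasDerivAt φ φ' x)
    (he : Tendsto (fun s => e s / (s - x)) (𝓝[>] x) (𝓝 d))
    (hle : ∀ s, |φ s - φ x| ≤ e s) : |φ'| ≤ d := by
  refine le_of_tendsto_of_tendsto hφ.tendsto_div_sub_nhdsGT.abs he <|
    eventually_nhdsWithin_of_forall fun s (hs : x < s) => ?_
  simp only [abs_div, abs_of_pos (sub_pos.2 hs)]
  exact div_le_div_of_nonneg_right (hle s) (sub_pos.2 hs).le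

theorem HasDerivAt.tendsto_symmetric_slope {φ : ℝ → ℝ} {φ' x : ℝ} (hφ : HasDerivAt φ φ' x) :
    Tendsto (fun r => (φ (x + r) - φ (x - r)) / (2 * r)) (𝓝[>] 0) (𝓝 φ') := by
  have h := hφ.tendsto_slope_zero
  have hr : Tendsto (fun r : ℝ => r) (𝓝[>] 0) (𝓝[≠] 0) :=
    tendsto_id.mono_left (nhdsWithin_mono _ (show Ioi 0 ⊆ {0}ᶜ from fun r hr => ne_of_gt hr))
  have hnr : Tendsto (fun r : ℝ => -r) (𝓝[>] 0) (𝓝[≠] 0) := by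
    have := tendsto_neg_nhdsGT_neg (a := (0 : ℝ))
    rw [neg_zero] at this
    exact this.mono_right (nhdsWithin_mono _ (show Iio 0 ⊆ {0}ᶜ from fun r hr => ne_of_lt hr))
  have := ((h.comp hr).add (h.comp hnr)).div_const 2
  rw [← two_mul, mul_div_cancel_left₀ _ two_ne_zero] at this
  refine this.congr' (eventually_nhdsWithin_of_forall fun r (hr : 0 < r) => ?_)
  simp only [Function.comp_apply, smul_eq_mul, ← sub_eq_add_neg]
  field_simp
  ring

theorem Monotone.rnDeriv_le_of_ofReal_sub_le {V : ℝ → ℝ} (hV : Monotone V) {ρ : Measure ℝ}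
    [IsLocallyFiniteMeasure ρ] (h : ∀ u v, u ≤ v → ENNReal.ofReal (V v - V u) ≤ ρ (Icc u v)) :
    ∀ᵐ x, hV.stieltjesFunction.measure.rnDeriv volume x ≤ ρ.rnDeriv volume x := by
  filter_upwards [hV.ae_hasDerivAt, Besicovitch.ae_tendsto_rnDeriv ρ volume,
    Measure.rnDeriv_lt_top hV.stieltjesFunction.measure volume] with x hx hρ hfin
  rw [← ENNReal.ofReal_toReal hfin.ne]
  refine le_of_tendsto_of_tendsto (ENNReal.tendsto_ofReal hx.tendsto_symmetric_slope) hρ <|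
    eventually_nhdsWithin_of_forall fun r (hr : 0 < r) => ?_
  dsimp only
  rw [ENNReal.ofReal_div_of_pos (by positivity), Real.volume_closedBall, Real.closedBall_eq_Icc]
  gcongr
  exact h _ _ (by linarith)

theorem eVariationOn_Icc_le_of_edist_le {α E : Type*} [LinearOrder α] [PseudoEMetricSpace E]
    {f : α → E} {F : α → α → ℝ≥0∞} {a b : α}
    (hF : ∀ u v w, u ≤ v → v ≤ w → F u v + F v w ≤ F u w)
    (hf : ∀ u v, a ≤ u → u ≤ v → v ≤ b → edist (f u) (f v) ≤ F u v) :
    eVariationOn f (Icc a b) ≤ F a b := by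
  refine iSup_le fun ⟨n, p, hp, hpab⟩ => ?_
  have partial_sum :
      ∀ k, ∑ i ∈ Finset.range k, edist (f (p (i + 1))) (f (p i)) ≤ F (p 0) (p k) := by
    intro k
    induction k with
    | zero => simp
    | succ k ih =>
      rw [Finset.sum_range_succ, edist_comm]
      calc _ ≤ F (p 0) (p k) + F (p k) (p (k + 1)) :=
            add_le_add ih (hf _ _ (hpab k).1 (hp k.le_succ) (hpab (k + 1)).2)
        _ ≤ F (p 0) (p (k + 1)) := hF _ _ _ (hp (Nat.zero_le k)) (hp k.le_succ)
  calc _ ≤ F (p 0) (p n) := partial_sum n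
    _ ≤ F a (p 0) + F (p 0) (p n) + F (p n) b := le_add_right le_add_self
    _ ≤ F a b := by
      grw [hF _ _ _ (hpab 0).1 (hp (Nat.zero_le n)),
        hF _ _ _ ((hpab 0).1.trans (hp (Nat.zero_le n))) (hpab n).2]

namespace LocallyBoundedVariationOn

variable {X : Type*} [PseudoMetricSpace X] {g : ℝ → X}

theorem monotone_variationOnFromTo (hg : LocallyBoundedVariationOn g univ) (x₀ : ℝ) :
    Monotone (variationOnFromTo g univ x₀) := fun _ _ h =>
  variationOnFromTo.monotoneOn hg (mem_univ x₀) (mem_univ _) (mem_univ _) h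

noncomputable def variationMeasure (hg : LocallyBoundedVariationOn g univ) : Measure ℝ :=
  (hg.monotone_variationOnFromTo 0).stieltjesFunction.measure

instance (hg : LocallyBoundedVariationOn g univ) : IsLocallyFiniteMeasure hg.variationMeasure :=
  StieltjesFunction.instIsLocallyFiniteMeasure _

variable (hg : LocallyBoundedVariationOn g univ) {u v : ℝ}
include hg

theorem eVariationOn_Icc_ne_top (u v : ℝ) : eVariationOn g (Icc u v) ≠ ⊤ := by
  simpa [BoundedVariationOn] using hg u v (mem_univ u) (mem_univ v)

theorem variationOnFromTo_sub (huv : u ≤ v) :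
    variationOnFromTo g univ 0 v - variationOnFromTo g univ 0 u =
      (eVariationOn g (Icc u v)).toReal := by
  rw [← variationOnFromTo.add hg (mem_univ 0) (mem_univ u) (mem_univ v),
    variationOnFromTo.eq_of_le g univ huv, univ_inter]
  ring

theorem ofReal_variationOnFromTo_sub (huv : u ≤ v) :
    ENNReal.ofReal (variationOnFromTo g univ 0 v - variationOnFromTo g univ 0 u) =
      eVariationOn g (Icc u v) := by
  rw [hg.variationOnFromTo_sub huv, ENNReal.ofReal_toReal (hg.eVariationOn_Icc_ne_top u v)]

theorem dist_le_variationOnFromTo_sub (huv : u ≤ v) :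
    dist (g u) (g v) ≤ variationOnFromTo g univ 0 v - variationOnFromTo g univ 0 u := by
  rw [hg.variationOnFromTo_sub huv, dist_edist]
  exact ENNReal.toReal_mono (hg.eVariationOn_Icc_ne_top u v)
    (eVariationOn.edist_le g ⟨le_rfl, huv⟩ ⟨huv, le_rfl⟩)

theorem variationMeasure_Ioo (s t : ℝ) :
    hg.variationMeasure (Ioo s t) = eVariationOn g (Ioo s t) := by
  rcases le_or_gt t s with hts | hst
  · rw [Ioo_eq_empty (not_lt.2 hts), measure_empty, eVariationOn.subsingleton g subsingleton_empty]
  set V := variationOnFromTo g univ 0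
  have hV := hg.monotone_variationOnFromTo 0
  rw [variationMeasure, StieltjesFunction.measure_Ioo, funext hV.stieltjesFunction_eq,
    leftLim_rightLim (hV.tendsto_leftLim t), eVariationOn.eq_biSup_inter_Icc]
  refine le_antisymm ?_ (iSup₂_le fun p hp => ?_)
  · have hlim : Tendsto (fun p : ℝ × ℝ => ENNReal.ofReal (V p.2 - V p.1)) (𝓝[>] s ×ˢ 𝓝[<] t)
        (𝓝 (ENNReal.ofReal (leftLim V t - rightLim V s))) :=
      ENNReal.tendsto_ofReal <|
        ((hV.tendsto_leftLim t).comp tendsto_snd).sub ((hV.tendsto_rightLim s).comp tendsto_fst)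
    obtain ⟨m, hsm, hmt⟩ := exists_between hst
    refine le_of_tendsto hlim ?_
    filter_upwards [prod_mem_prod (Ioo_mem_nhdsGT hsm) (Ioo_mem_nhdsLT hmt)] with p hp
    refine le_iSup₂_of_le p ⟨⟨hp.1.1, hp.1.2.trans hmt⟩, ⟨hsm.trans hp.2.1, hp.2.2⟩,
      hp.1.2.le.trans hp.2.1.le⟩ ?_
    rw [hg.ofReal_variationOnFromTo_sub (hp.1.2.le.trans hp.2.1.le),
      inter_eq_right.2 (Icc_subset_Ioo hp.1.1 hp.2.2)]
  · rw [inter_eq_right.2 (Icc_subset_Ioo hp.1.1 hp.2.1.2), ← hg.ofReal_variationOnFromTo_sub hp.2.2]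
    exact ENNReal.ofReal_le_ofReal (sub_le_sub (hV.le_leftLim hp.2.1.2) (hV.rightLim_le hp.1.1))

theorem ofReal_rightLim_sub_le_variationMeasure_singleton (x : ℝ) :
    ENNReal.ofReal (rightLim (variationOnFromTo g univ 0) x - variationOnFromTo g univ 0 x) ≤
      hg.variationMeasure {x} := by
  have hV := hg.monotone_variationOnFromTo 0
  rw [variationMeasure, StieltjesFunction.measure_singleton, funext hV.stieltjesFunction_eq,
    leftLim_rightLim (hV.tendsto_leftLim x)]
  exact ENNReal.ofReal_le_ofReal (sub_le_sub_left (hV.leftLim_le le_rfl) _)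

end LocallyBoundedVariationOn

section RightMetricDerivative

variable {X : Type*} [PseudoMetricSpace X] {g : ℝ → X} {D : ℝ → ℝ}

theorem rnDeriv_stieltjesFunction_le_add {V P : ℝ → ℝ} (hV : Monotone V) (hP : Monotone P)
    (hD : ∀ᵐ x, Tendsto (fun s => dist (g s) (g x) / (s - x)) (𝓝[>] x) (𝓝 (D x)))
    (hPV : ∀ u v, |(P v - V v) - (P u - V u)| ≤ dist (g v) (g u)) :
    ∀ᵐ x, hV.stieltjesFunction.measure.rnDeriv volume x ≤
      hP.stieltjesFunction.measure.rnDeriv volume x + ENNReal.ofReal (D x) := by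
  filter_upwards [hD, hV.ae_hasDerivAt, hP.ae_hasDerivAt,
    Measure.rnDeriv_lt_top hV.stieltjesFunction.measure volume,
    Measure.rnDeriv_lt_top hP.stieltjesFunction.measure volume] with x hDx hVx hPx hVfin hPfin
  have hderiv := (hPx.sub hVx).abs_le_of_tendsto_nhdsGT hDx fun s => hPV x s
  rw [← ENNReal.ofReal_toReal hVfin.ne, ← ENNReal.ofReal_toReal hPfin.ne]
  exact (ENNReal.ofReal_le_ofReal (by linarith [(abs_le.1 hderiv).1])).trans ENNReal.ofReal_add_le

theorem Monotone.rightLim_sub_le_of_rnDeriv_le {V P : ℝ → ℝ} (hV : Monotone V) (hP : Monotone P)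
    {f : ℝ → ℝ≥0∞} (h : ∀ᵐ x, hV.stieltjesFunction.measure.rnDeriv volume x ≤
      hP.stieltjesFunction.measure.rnDeriv volume x + f x)
    {u v : ℝ} (huv : u ≤ v) (hf : ∫⁻ x in Ioc u v, f x ≠ ⊤) :
    rightLim V v - rightLim V u ≤
      (hV.stieltjesFunction.measure.singularPart volume (Ioc u v) + ∫⁻ x in Ioc u v, f x).toReal +
        (rightLim P v - rightLim P u) := by
  have key := Measure.le_singularPart_add_add_setLIntegral h (measurableSet_Ioc (a := u) (b := v))
  rw [StieltjesFunction.measure_Ioc, StieltjesFunction.measure_Ioc, hV.stieltjesFunction_eq,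
    hV.stieltjesFunction_eq, hP.stieltjesFunction_eq, hP.stieltjesFunction_eq,
    add_right_comm] at key
  have hsing : hV.stieltjesFunction.measure.singularPart volume (Ioc u v) ≠ ⊤ :=
    ne_top_of_le_ne_top measure_Ioc_lt_top.ne (Measure.singularPart_le _ _ _)
  have := ENNReal.toReal_mono (by finiteness) key
  rwa [ENNReal.toReal_ofReal (sub_nonneg.2 (hV.rightLim huv)), ENNReal.toReal_add (by finiteness)
    ENNReal.ofReal_ne_top, ENNReal.toReal_ofReal (sub_nonneg.2 (hP.rightLim huv))] at this

theorem Monotone.abs_sub_le_of_rnDeriv_le {V ψ : ℝ → ℝ} (hV : Monotone V)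
    (hψ : ∀ u v, u ≤ v → |ψ v - ψ u| ≤ V v - V u) (hP : Monotone fun x => V x + ψ x)
    (hQ : Monotone fun x => V x - ψ x) {f : ℝ → ℝ≥0∞}
    (hfP : ∀ᵐ x, hV.stieltjesFunction.measure.rnDeriv volume x ≤
      hP.stieltjesFunction.measure.rnDeriv volume x + f x)
    (hfQ : ∀ᵐ x, hV.stieltjesFunction.measure.rnDeriv volume x ≤
      hQ.stieltjesFunction.measure.rnDeriv volume x + f x)
    {u v : ℝ} (huv : u ≤ v) (hf : ∫⁻ x in Ioc u v, f x ≠ ⊤) :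
    |ψ v - ψ u| ≤ (rightLim V u - V u) +
      (hV.stieltjesFunction.measure.singularPart volume (Ioc u v) + ∫⁻ x in Ioc u v, f x).toReal +
      (rightLim V v - V v) := by
  -- `ψ` is both `(V + ψ) - V` and `V - (V - ψ)`; comparing the Stieltjes measures on `(u, v]`
  -- bounds the increment of the right limit of `ψ`, and the jumps of `ψ` are those of `V` at most.
  have hPbound := hV.rightLim_sub_le_of_rnDeriv_le hP hfP huv hf
  have hQbound := hV.rightLim_sub_le_of_rnDeriv_le hQ hfQ huv hf
  have hlimP : ∀ x, Tendsto ψ (𝓝[>] x) (𝓝 (rightLim (fun x => V x + ψ x) x - rightLim V x)) :=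
    fun x => ((hP.tendsto_rightLim x).sub (hV.tendsto_rightLim x)).congr fun s => by simp
  have hlimQ : ∀ x, Tendsto ψ (𝓝[>] x) (𝓝 (rightLim V x - rightLim (fun x => V x - ψ x) x)) :=
    fun x => ((hV.tendsto_rightLim x).sub (hQ.tendsto_rightLim x)).congr fun s => by simp
  have hPQ := fun x => tendsto_nhds_unique (hlimP x) (hlimQ x)
  have hjump : ∀ x, |(rightLim (fun x => V x + ψ x) x - rightLim V x) - ψ x| ≤
      rightLim V x - V x := fun x =>
    le_of_tendsto_of_tendsto (((hlimP x).sub_const (ψ x)).abs) ((hV.tendsto_rightLim x).sub_const _)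
      (eventually_nhdsWithin_of_forall fun s (hs : x < s) => hψ x s hs.le)
  rw [abs_le]
  constructor <;>
    linarith [abs_le.1 (hjump u), abs_le.1 (hjump v), hPQ u, hPQ v, hPbound, hQbound]

end RightMetricDerivative

namespace LocallyBoundedVariationOn

variable {X : Type*} [PseudoMetricSpace X] {g : ℝ → X} (hg : LocallyBoundedVariationOn g univ)
  {D : ℝ → ℝ} (hD : ∀ᵐ x, Tendsto (fun s => dist (g s) (g x) / (s - x)) (𝓝[>] x) (𝓝 (D x)))
include hg hD

theorem ofReal_le_rnDeriv_variationMeasure :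
    ∀ᵐ x, ENNReal.ofReal (D x) ≤ hg.variationMeasure.rnDeriv volume x := by
  have hV := hg.monotone_variationOnFromTo 0
  filter_upwards [hD, hV.ae_hasDerivAt, Measure.rnDeriv_lt_top hg.variationMeasure volume]
    with x hDx hVx hfin
  rw [← ENNReal.ofReal_toReal hfin.ne]
  exact ENNReal.ofReal_le_ofReal <| hVx.le_of_tendsto_nhdsGT hDx fun s hs => by
    rw [dist_comm]
    exact hg.dist_le_variationOnFromTo_sub hs.le

theorem withDensity_le_variationMeasure :
    volume.withDensity (fun x => ENNReal.ofReal (D x)) ≤ hg.variationMeasure :=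
  (withDensity_mono (hg.ofReal_le_rnDeriv_variationMeasure hD)).trans
    (Measure.withDensity_rnDeriv_le _ _)

theorem abs_dist_sub_dist_le (q : ℝ) {u v : ℝ} (huv : u ≤ v) :
    |dist (g v) (g q) - dist (g u) (g q)| ≤
      (rightLim (variationOnFromTo g univ 0) u - variationOnFromTo g univ 0 u) +
      (hg.variationMeasure.singularPart volume (Ioc u v) +
        volume.withDensity (fun x => ENNReal.ofReal (D x)) (Ioc u v)).toReal +
      (rightLim (variationOnFromTo g univ 0) v - variationOnFromTo g univ 0 v) := by
  set V := variationOnFromTo g univ 0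
  set ψ := fun x => dist (g x) (g q)
  have hV : Monotone V := hg.monotone_variationOnFromTo 0
  have hψ : ∀ u v, u ≤ v → |ψ v - ψ u| ≤ V v - V u := fun u v huv =>
    (abs_dist_sub_le _ _ _).trans (dist_comm (g u) (g v) ▸ hg.dist_le_variationOnFromTo_sub huv)
  have hP : Monotone fun x => V x + ψ x := fun u v huv => by
    linarith [(abs_le.1 (hψ u v huv)).1]
  have hQ : Monotone fun x => V x - ψ x := fun u v huv => by
    linarith [(abs_le.1 (hψ u v huv)).2]
  have hint : ∫⁻ x in Ioc u v, ENNReal.ofReal (D x) ≠ ⊤ := by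
    rw [← withDensity_apply _ measurableSet_Ioc]
    exact ne_top_of_le_ne_top measure_Ioc_lt_top.ne (hg.withDensity_le_variationMeasure hD _)
  have h := hV.abs_sub_le_of_rnDeriv_le hψ hP hQ
    (rnDeriv_stieltjesFunction_le_add hV hP hD fun u v => by
      simpa only [add_sub_cancel_left] using abs_dist_sub_le (g v) (g u) (g q))
    (rnDeriv_stieltjesFunction_le_add hV hQ hD fun u v => by
      simpa only [sub_sub_cancel_left, neg_sub_neg, abs_sub_comm] using
        abs_dist_sub_le (g v) (g u) (g q)) huv hint
  rwa [← withDensity_apply _ measurableSet_Ioc] at h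

theorem edist_le_singularPart_add {u v : ℝ} (huv : u ≤ v) :
    edist (g u) (g v) ≤ hg.variationMeasure.singularPart volume {u} +
      (hg.variationMeasure.singularPart volume (Ioc u v) +
        volume.withDensity (fun x => ENNReal.ofReal (D x)) (Ioc u v)) +
      hg.variationMeasure.singularPart volume {v} := by
  have hjump : ∀ x, ENNReal.ofReal (rightLim (variationOnFromTo g univ 0) x -
      variationOnFromTo g univ 0 x) ≤ hg.variationMeasure.singularPart volume {x} := fun x =>
    (hg.ofReal_rightLim_sub_le_variationMeasure_singleton x).trans_eq
      (Measure.apply_eq_singularPart_apply Real.volume_singleton)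
  have hfin : hg.variationMeasure.singularPart volume (Ioc u v) +
      volume.withDensity (fun x => ENNReal.ofReal (D x)) (Ioc u v) ≠ ⊤ :=
    ENNReal.add_ne_top.2
      ⟨ne_top_of_le_ne_top measure_Ioc_lt_top.ne (Measure.singularPart_le _ _ _),
        ne_top_of_le_ne_top measure_Ioc_lt_top.ne (hg.withDensity_le_variationMeasure hD _)⟩
  have h := hg.abs_dist_sub_dist_le hD u huv
  rw [dist_self, sub_zero, abs_of_nonneg dist_nonneg] at h
  rw [edist_comm, edist_dist]
  refine (ENNReal.ofReal_le_ofReal h).trans <| ENNReal.ofReal_add_le.trans <|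
    (add_le_add_left ENNReal.ofReal_add_le _).trans ?_
  rw [ENNReal.ofReal_toReal hfin]
  gcongr <;> apply hjump

-- The singular part is counted three times: harmless, since only densities matter below.
theorem eVariationOn_Icc_le {u v : ℝ} :
    eVariationOn g (Icc u v) ≤ (volume.withDensity (fun x => ENNReal.ofReal (D x)) +
      (hg.variationMeasure.singularPart volume + hg.variationMeasure.singularPart volume +
        hg.variationMeasure.singularPart volume)) (Icc u v) := by
  set σs := hg.variationMeasure.singularPart volume
  set w := volume.withDensity fun x => ENNReal.ofReal (D x)
  calc eVariationOn g (Icc u v) ≤ σs (Ico u v) + (σs (Ioc u v) + w (Ioc u v)) + σs (Ioc u v) := by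
        refine eVariationOn_Icc_le_of_edist_le
          (F := fun a b => σs (Ico a b) + (σs (Ioc a b) + w (Ioc a b)) + σs (Ioc a b))
          (fun a b c hab hbc => le_of_eq ?_) fun a b _ hab _ => ?_
        · simp only [← Ico_union_Ico_eq_Ico hab hbc, ← Ioc_union_Ioc_eq_Ioc hab hbc,
            measure_union Ico_disjoint_Ico_same measurableSet_Ico,
            measure_union (Ioc_disjoint_Ioc_of_le le_rfl) measurableSet_Ioc]
          ring
        rcases hab.eq_or_lt with rfl | hlt
        · simp
        refine (hg.edist_le_singularPart_add hD hab).trans ?_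
        gcongr
        · exact singleton_subset_iff.2 ⟨le_rfl, hlt⟩
        · exact singleton_subset_iff.2 ⟨hlt, le_rfl⟩
    _ ≤ σs (Icc u v) + (σs (Icc u v) + w (Icc u v)) + σs (Icc u v) := by
        gcongr <;> first | exact Ico_subset_Icc_self | exact Ioc_subset_Icc_self
    _ = (w + (σs + σs + σs)) (Icc u v) := by
        simp only [Measure.add_apply]
        ring

theorem rnDeriv_variationMeasure_ae_eq (hDmeas : Measurable D) :
    hg.variationMeasure.rnDeriv volume =ᵐ[volume] fun x => ENNReal.ofReal (D x) := by
  set σs := hg.variationMeasure.singularPart volume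
  set w := volume.withDensity fun x => ENNReal.ofReal (D x)
  have hσs : σs ⟂ₘ volume := Measure.mutuallySingular_singularPart _ _
  have : IsLocallyFiniteMeasure w :=
    Measure.isLocallyFiniteMeasure_of_le (hg.withDensity_le_variationMeasure hD)
  have : IsLocallyFiniteMeasure σs :=
    Measure.isLocallyFiniteMeasure_of_le (Measure.singularPart_le _ _)
  have hle : ∀ᵐ x, hg.variationMeasure.rnDeriv volume x ≤
      (w + (σs + σs + σs)).rnDeriv volume x :=
    (hg.monotone_variationOnFromTo 0).rnDeriv_le_of_ofReal_sub_le fun u v huv =>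
      (hg.ofReal_variationOnFromTo_sub huv).trans_le (hg.eVariationOn_Icc_le hD)
  have hρ : (w + (σs + σs + σs)).rnDeriv volume =ᵐ[volume] fun x => ENNReal.ofReal (D x) :=
    (Measure.rnDeriv_add_of_mutuallySingular _ _ _
      ((hσs.add_left hσs).add_left hσs)).trans
      (Measure.rnDeriv_withDensity _ hDmeas.ennreal_ofReal)
  filter_upwards [hle, hρ, hg.ofReal_le_rnDeriv_variationMeasure hD] with x h₁ h₂ h₃
  exact le_antisymm (h₁.trans h₂.le) h₃

end LocallyBoundedVariationOn

theorem countable_setOf_forall_notMem_Ioo {α : Type*} [LinearOrder α] (s : Set α) :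
    {x ∈ s | ∀ p ∈ s, ∀ q ∈ s, x ∉ Ioo p q}.Countable := by
  refine ((Set.Subsingleton.countable (s := {x | IsLeast s x}) fun _ hx _ hy => hx.unique hy).union
    (Set.Subsingleton.countable (s := {x | IsGreatest s x}) fun _ hx _ hy => hx.unique hy)).mono ?_
  rintro x ⟨hx, h⟩
  by_contra hne
  simp only [mem_union, not_or] at hne
  obtain ⟨p, hp, hpx⟩ : ∃ p ∈ s, p < x := by simpa [IsLeast, lowerBounds, hx] using hne.1
  obtain ⟨q, hq, hxq⟩ : ∃ q ∈ s, x < q := by simpa [IsGreatest, upperBounds, hx] using hne.2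
  exact h p hp q hq ⟨hpx, hxq⟩

theorem exists_Icc_superset_Ioo_inter {I : Set ℝ} {u v : ℝ} (hu : u ∈ I) (hv : v ∈ I) :
    ∃ a ∈ I, ∃ b ∈ I, ∃ ε > 0, Ioo (u - ε) (v + ε) ∩ I ⊆ Icc a b := by
  obtain ⟨a, ha, ε₁, hε₁, hleft⟩ : ∃ a ∈ I, ∃ ε > 0, ∀ x ∈ I, u - ε < x → a ≤ x := by
    by_cases h : ∃ c ∈ I, c < u
    · obtain ⟨c, hc, hcu⟩ := h
      exact ⟨c, hc, u - c, sub_pos.2 hcu, fun x _ hx => by linarith⟩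
    · push Not at h
      exact ⟨u, hu, 1, one_pos, fun x hx _ => h x hx⟩
  obtain ⟨b, hb, ε₂, hε₂, hright⟩ : ∃ b ∈ I, ∃ ε > 0, ∀ x ∈ I, x < v + ε → x ≤ b := by
    by_cases h : ∃ d ∈ I, v < d
    · obtain ⟨d, hd, hvd⟩ := h
      exact ⟨d, hd, d - v, sub_pos.2 hvd, fun x _ hx => by linarith⟩
    · push Not at h
      exact ⟨v, hv, 1, one_pos, fun x hx _ => h x hx⟩
  refine ⟨a, ha, b, hb, min ε₁ ε₂, lt_min hε₁ hε₂, fun x hx => ⟨hleft x hx.2 ?_, hright x hx.2 ?_⟩⟩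
  · linarith [min_le_left ε₁ ε₂, hx.1.1]
  · linarith [min_le_right ε₁ ε₂, hx.1.2]

section IccExtend

variable {X : Type*} [PseudoMetricSpace X] {a b : ℝ}

theorem eVariationOn_IccExtend (hab : a ≤ b) (γ : ℝ → X) :
    eVariationOn (IccExtend hab ((Icc a b).domRestrict γ)) univ = eVariationOn γ (Icc a b) := by
  have hmono : Monotone fun x => (projIcc a b hab x : ℝ) := fun _ _ h => monotone_projIcc hab h
  have hrange : range (fun x => (projIcc a b hab x : ℝ)) = Icc a b := by
    refine Subset.antisymm (range_subset_iff.2 fun x => (projIcc a b hab x).2) fun x hx => ?_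
    exact ⟨x, by simp only [projIcc_of_mem hab hx]⟩
  rw [show IccExtend hab ((Icc a b).domRestrict γ) = γ ∘ fun x => (projIcc a b hab x : ℝ) from rfl,
    eVariationOn.comp_eq_of_monotoneOn _ _ (hmono.monotoneOn univ), image_univ, hrange]

theorem boundedVariationOn_IccExtend (hab : a ≤ b) {γ : ℝ → X}
    (hγ : eVariationOn γ (Icc a b) ≠ ⊤) :
    BoundedVariationOn (IccExtend hab ((Icc a b).domRestrict γ)) univ := by
  rwa [BoundedVariationOn, eVariationOn_IccExtend]

theorem ae_tendsto_slope_IccExtend {I : Set ℝ} {γ : ℝ → X} (hab : a < b) (hsub : Icc a b ⊆ I)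
    {D : ℝ → ℝ} (hD : ∀ᵐ t ∂(volume.restrict I),
      Tendsto (fun s => dist (γ s) (γ t) / |s - t|) (𝓝[I \ {t}] t) (𝓝 (D t))) :
    ∀ᵐ x, Tendsto (fun s => dist (IccExtend hab.le ((Icc a b).domRestrict γ) s)
      (IccExtend hab.le ((Icc a b).domRestrict γ) x) / (s - x)) (𝓝[>] x)
        (𝓝 ((Ioo a b).indicator D x)) := by
  have hD' := (ae_restrict_iff' measurableSet_Icc).1 (ae_restrict_of_ae_restrict_of_subset hsub hD)
  filter_upwards [hD', Measure.ae_ne volume a] with x hx hxa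
  rcases hxa.lt_or_gt with hxa | hax
  · rw [indicator_of_notMem fun h => hxa.not_gt h.1]
    refine tendsto_const_nhds.congr' ?_
    filter_upwards [Ioo_mem_nhdsGT hxa] with s hs
    rw [IccExtend_of_le_left _ _ hs.2.le, IccExtend_of_le_left _ _ hxa.le, dist_self, zero_div]
  rcases lt_or_ge x b with hxb | hbx
  · rw [indicator_of_mem (show x ∈ Ioo a b from ⟨hax, hxb⟩), ← nhdsWithin_Ioo_eq_nhdsGT hxb]
    refine ((hx ⟨hax.le, hxb.le⟩).mono_left (nhdsWithin_mono _ (show Ioo x b ⊆ I \ {x} from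
      fun s hs => ⟨hsub ⟨hax.le.trans hs.1.le, hs.2.le⟩, ne_of_gt hs.1⟩))).congr' ?_
    filter_upwards [self_mem_nhdsWithin] with s hs
    rw [IccExtend_of_mem _ _ ⟨hax.le.trans hs.1.le, hs.2.le⟩, IccExtend_of_mem _ _ ⟨hax.le, hxb.le⟩,
      domRestrict_apply, domRestrict_apply, abs_of_pos (sub_pos.2 hs.1)]
  · rw [indicator_of_notMem fun h => hbx.not_gt h.2]
    refine tendsto_const_nhds.congr' ?_
    filter_upwards [self_mem_nhdsWithin] with s (hs : x < s)
    rw [IccExtend_of_right_le _ _ (hbx.trans hs.le), IccExtend_of_right_le _ _ hbx, dist_self,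
      zero_div]

end IccExtend

namespace IsSpeedMeasure

variable {X : Type*} [MetricSpace X] {I : Set ℝ} {γ : ℝ → X} {ν : Measure ℝ}
  (hI : I.OrdConnected) (hγ : ∀ a ∈ I, ∀ b ∈ I, a ≤ b → eVariationOn γ (Set.Icc a b) < ⊤)
  (hν : IsSpeedMeasure γ I ν)

include hI hν

theorem apply_Ioo_inter (s t : ℝ) : ν (Ioo s t ∩ I) = eVariationOn γ (Ioo s t ∩ I) :=
  hν.2 _ inter_subset_right (ordConnected_Ioo.inter hI) ⟨_, isOpen_Ioo, rfl⟩

include hγ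

theorem eVariationOn_Icc_le {u v : ℝ} (hu : u ∈ I) (hv : v ∈ I) (huv : u ≤ v) :
    eVariationOn γ (Icc u v) ≤ ν (Icc u v) := by
  obtain ⟨a, ha, b, hb, ε, hε, hsub⟩ := exists_Icc_superset_Ioo_inter hu hv
  have hua : u ∈ Icc a b := hsub ⟨⟨by linarith, by linarith⟩, hu⟩
  have hab : a ≤ b := hua.1.trans hua.2
  have hlim := tendsto_measure_biInter_gt (μ := ν) (s := fun δ => Ioo (u - δ) (v + δ) ∩ I) (a := 0)
    (fun δ _ => (measurableSet_Ioo.inter hI.measurableSet).nullMeasurableSet)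
    (fun δ δ' _ h => inter_subset_inter_left _ (Ioo_subset_Ioo (by linarith) (by linarith)))
    ⟨ε, hε, by
      rw [hν.apply_Ioo_inter hI]
      exact ((eVariationOn.mono γ hsub).trans_lt (hγ a ha b hb hab)).ne⟩
  have hinter : ⋂ δ > (0 : ℝ), Ioo (u - δ) (v + δ) ∩ I = Icc u v := by
    ext x
    simp only [mem_iInter, mem_inter_iff, mem_Ioo, mem_Icc]
    refine ⟨fun h => ⟨le_of_forall_pos_lt_add fun δ hδ => ?_,
      le_of_forall_pos_lt_add fun δ hδ => (h δ hδ).1.2⟩,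
      fun h δ hδ => ⟨⟨by linarith [h.1], by linarith [h.2]⟩, hI.out hu hv h⟩⟩
    linarith [(h δ hδ).1.1]
  rw [hinter] at hlim
  refine ge_of_tendsto hlim (eventually_nhdsWithin_of_forall fun δ (hδ : 0 < δ) => ?_)
  rw [Function.comp_apply, hν.apply_Ioo_inter hI]
  exact eVariationOn.mono γ fun x hx =>
    ⟨⟨by linarith [hx.1], by linarith [hx.2]⟩, hI.out hu hv hx⟩

theorem eVariationOn_le {J : Set ℝ} (hJI : J ⊆ I) (hJ : J.OrdConnected) :
    eVariationOn γ J ≤ ν J := by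
  rw [eVariationOn.eq_biSup_inter_Icc]
  refine iSup₂_le fun p hp => ?_
  rw [inter_eq_right.2 (hJ.out hp.1 hp.2.1)]
  exact (hν.eVariationOn_Icc_le hI hγ (hJI hp.1) (hJI hp.2.1) hp.2.2).trans
    (measure_mono (hJ.out hp.1 hp.2.1))

theorem measure_Ioo_lt_top {a b : ℝ} (ha : a ∈ I) (hb : b ∈ I) : ν (Ioo a b) < ⊤ := by
  rw [← inter_eq_left.2 (Ioo_subset_Icc_self.trans (hI.out ha hb)), hν.apply_Ioo_inter hI]
  rcases le_total a b with hab | hba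
  · exact (eVariationOn.mono γ (inter_subset_left.trans Ioo_subset_Icc_self)).trans_lt
      (hγ a ha b hb hab)
  · simp [Ioo_eq_empty (not_lt.2 hba)]

theorem restrict_Ioo_eq_variationMeasure {g : ℝ → X} (hg : LocallyBoundedVariationOn g univ)
    {a b : ℝ} (hgγ : EqOn g γ (Icc a b)) (ha : a ∈ I) (hb : b ∈ I) :
    ν.restrict (Ioo a b) = hg.variationMeasure.restrict (Ioo a b) := by
  have : IsFiniteMeasure (ν.restrict (Ioo a b)) :=
    ⟨by simpa using hν.measure_Ioo_lt_top hI hγ ha hb⟩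
  refine Real.measure_ext_Ioo_rat fun p q => ?_
  have hJ : Ioo (max (p : ℝ) a) (min (q : ℝ) b) ⊆ Ioo a b :=
    Ioo_subset_Ioo (le_max_right _ _) (min_le_right _ _)
  have hJI := hJ.trans (Ioo_subset_Icc_self.trans (hI.out ha hb))
  rw [Measure.restrict_apply measurableSet_Ioo, Measure.restrict_apply measurableSet_Ioo,
    Ioo_inter_Ioo, hg.variationMeasure_Ioo, ← inter_eq_left.2 hJI, hν.apply_Ioo_inter hI,
    inter_eq_left.2 hJI]
  exact eVariationOn.eq_of_eqOn fun x hx => (hgγ (Ioo_subset_Icc_self (hJ hx))).symm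

theorem measure_singleton_eq_zero {t : ℝ} (ht : t ∈ I) (hc : ContinuousWithinAt γ I t) :
    ν {t} = 0 := by
  obtain ⟨a, ha, b, hb, ε, hε, hsub⟩ := exists_Icc_superset_Ioo_inter ht ht
  have hat : t ∈ Icc a b := hsub ⟨⟨by linarith, by linarith⟩, ht⟩
  have hab : a ≤ b := hat.1.trans hat.2
  set g := IccExtend hab ((Icc a b).domRestrict γ)
  have hg : BoundedVariationOn g univ := boundedVariationOn_IccExtend hab (hγ a ha b hb hab).ne
  have hgt : ContinuousAt g t := by
    have hc' : ContinuousWithinAt γ I (projIcc a b hab t : ℝ) := by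
      rwa [projIcc_of_mem hab hat]
    exact (continuousWithinAt_univ _ _).1 <| hc'.comp (f := fun x => (projIcc a b hab x : ℝ))
      (continuous_subtype_val.comp continuous_projIcc).continuousWithinAt
      fun x _ => hI.out ha hb (projIcc a b hab x).2
  have hshift : ∀ c : ℝ, Tendsto (fun δ => t + c * δ) (𝓝[>] 0) (𝓝[univ] t) := fun c => by
    rw [nhdsWithin_univ]
    exact ((continuous_const.add (continuous_const.mul continuous_id)).tendsto' 0 t
      (by simp)).mono_left nhdsWithin_le_nhds
  have hsmall := ((hg.tendsto_eVariationOn_Icc_zero_left hgt.continuousWithinAt).comp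
    (hshift (-1))).add ((hg.tendsto_eVariationOn_Icc_zero_right t hgt.continuousWithinAt).comp
    (hshift 1))
  rw [add_zero] at hsmall
  refine le_antisymm (ge_of_tendsto hsmall ?_) zero_le
  filter_upwards [Ioo_mem_nhdsGT hε] with δ hδ
  simp only [Function.comp_apply, univ_inter, neg_one_mul, ← sub_eq_add_neg, one_mul]
  calc ν {t} ≤ ν (Ioo (t - δ) (t + δ) ∩ I) :=
        measure_mono (singleton_subset_iff.2 ⟨⟨by linarith [hδ.1], by linarith [hδ.1]⟩, ht⟩)
    _ = eVariationOn g (Ioo (t - δ) (t + δ) ∩ I) := by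
        rw [hν.apply_Ioo_inter hI]
        refine eVariationOn.eq_of_eqOn fun x hx =>
          (IccExtend_of_mem hab ((Icc a b).domRestrict γ) (hsub ?_)).symm
        exact ⟨⟨by linarith [hx.1.1, hδ.2], by linarith [hx.1.2, hδ.2]⟩, hx.2⟩
    _ ≤ eVariationOn g (Icc (t - δ) (t + δ)) :=
        eVariationOn.mono g fun x hx => ⟨hx.1.1.le, hx.1.2.le⟩
    _ = eVariationOn g (Icc (t - δ) t) + eVariationOn g (Icc t (t + δ)) := by
        simpa using (eVariationOn.Icc_add_Icc g (by linarith [hδ.1]) (by linarith [hδ.1])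
          (mem_univ t)).symm

theorem measure_le_eVariationOn {J : Set ℝ} (hJI : J ⊆ I) (hJ : J.OrdConnected)
    (hJc : ∀ t ∈ J, (¬ ∃ U : Set ℝ, IsOpen U ∧ t ∈ U ∧ U ∩ I ⊆ J) → ContinuousWithinAt γ I t) :
    ν J ≤ eVariationOn γ J := by
  -- `W ∩ I` is the relative interior of `J`; the rest of `J` consists of endpoints of `J`.
  set W := ⋃₀ {U : Set ℝ | IsOpen U ∧ U ∩ I ⊆ J}
  have hWJ : W ∩ I ⊆ J := fun x ⟨⟨U, ⟨_, hUJ⟩, hxU⟩, hxI⟩ => hUJ ⟨hxU, hxI⟩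
  have hIoo : ∀ p ∈ J, ∀ q ∈ J, Ioo p q ⊆ W := fun p hp q hq x hx =>
    ⟨Ioo p q, ⟨isOpen_Ioo, fun y hy => hJ.out hp hq ⟨hy.1.1.le, hy.1.2.le⟩⟩, hx⟩
  have hW : ν (W ∩ I) = eVariationOn γ (W ∩ I) := by
    refine hν.2 _ inter_subset_right ⟨fun x hx y hy z hz => ⟨?_, hI.out hx.2 hy.2 hz⟩⟩
      ⟨W, isOpen_sUnion fun U hU => hU.1, rfl⟩
    rcases hz.1.eq_or_lt with rfl | hxz
    · exact hx.1
    rcases hz.2.eq_or_lt with rfl | hzy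
    · exact hy.1
    exact hIoo x (hWJ hx) y (hWJ hy) ⟨hxz, hzy⟩
  have hrest : ν (J \ (W ∩ I)) = 0 := by
    have hcount : (J \ (W ∩ I)).Countable := by
      refine (countable_setOf_forall_notMem_Ioo J).mono fun x hx => ?_
      exact ⟨hx.1, fun p hp q hq hpq => hx.2 ⟨hIoo p hp q hq hpq, hJI hx.1⟩⟩
    rw [← biUnion_of_singleton (J \ (W ∩ I)), measure_biUnion_null_iff hcount]
    refine fun t ht => hν.measure_singleton_eq_zero hI hγ (hJI ht.1) (hJc t ht.1 ?_)
    rintro ⟨U, hU, htU, hUJ⟩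
    exact ht.2 ⟨⟨U, ⟨hU, hUJ⟩, htU⟩, hJI ht.1⟩
  calc ν J ≤ ν (J ∩ (W ∩ I)) + ν (J \ (W ∩ I)) := measure_le_inter_add_sdiff ν J (W ∩ I)
    _ ≤ eVariationOn γ (W ∩ I) := by
        rw [hrest, add_zero, ← hW]
        exact measure_mono inter_subset_right
    _ ≤ eVariationOn γ J := eVariationOn.mono γ hWJ

variable {νac νsing : Measure ℝ} (hdecomp : ν = νac + νsing) (hac : νac ≪ volume)
  (hsing : νsing ⟂ₘ volume) {D : ℝ → ℝ} (hDmeas : Measurable D)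
  (hD : ∀ᵐ t ∂(volume.restrict I),
    Tendsto (fun s => dist (γ s) (γ t) / |s - t|) (𝓝[I \ {t}] t) (𝓝 (D t)))
include hdecomp hac hsing hDmeas hD

theorem restrict_Ioo_absolutelyContinuousPart {a b : ℝ} (ha : a ∈ I) (hb : b ∈ I) :
    νac.restrict (Ioo a b) =
      (volume.withDensity fun t => ENNReal.ofReal (D t)).restrict (Ioo a b) := by
  rcases le_or_gt b a with hba | hab
  · simp [Ioo_eq_empty (not_lt.2 hba)]
  set g := IccExtend hab.le ((Icc a b).domRestrict γ)
  have hg : LocallyBoundedVariationOn g univ :=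
    (boundedVariationOn_IccExtend hab.le (hγ a ha b hb hab.le).ne).locallyBoundedVariationOn
  have hνac : νac.restrict (Ioo a b) =
      volume.withDensity ((ν.restrict (Ioo a b)).rnDeriv volume) := by
    have : IsFiniteMeasure (νac.restrict (Ioo a b)) := ⟨by
      refine (Measure.restrict_apply_univ _).trans_lt (lt_of_le_of_lt ?_
        (hν.measure_Ioo_lt_top hI hγ ha hb))
      rw [hdecomp, Measure.add_apply]
      exact le_self_add⟩
    exact Measure.eq_withDensity_rnDeriv_of_eq_add (by rw [hdecomp, Measure.restrict_add])
      ((Measure.absolutelyContinuous_of_le Measure.restrict_le_self).trans hac)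
      (hsing.restrict _)
  rw [hνac, hν.restrict_Ioo_eq_variationMeasure hI hγ hg
      (fun x hx => IccExtend_of_mem hab.le ((Icc a b).domRestrict γ) hx) ha hb,
    restrict_withDensity measurableSet_Ioo, ← withDensity_indicator measurableSet_Ioo]
  refine withDensity_congr_ae ?_
  filter_upwards [Measure.rnDeriv_restrict hg.variationMeasure volume (s := Ioo a b)
      measurableSet_Ioo,
    hg.rnDeriv_variationMeasure_ae_eq (ae_tendsto_slope_IccExtend hab (hI.out ha hb) hD)
      (hDmeas.indicator measurableSet_Ioo)] with x h₁ h₂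
  rw [h₁]
  by_cases hx : x ∈ Ioo a b
  · simp [indicator_of_mem hx, h₂]
  · simp [indicator_of_notMem hx]

theorem restrict_absolutelyContinuousPart :
    νac.restrict I = (volume.withDensity fun t => ENNReal.ofReal (D t)).restrict I := by
  set Ω := ⋃ p : {p : ℚ × ℚ // (p.1 : ℝ) ∈ I ∧ (p.2 : ℝ) ∈ I}, Ioo (p.1.1 : ℝ) p.1.2
  have hΩ : Ω =ᵐ[volume] I := by
    refine ae_eq_set.2 ⟨?_, ?_⟩
    · rw [sdiff_eq_empty.2 (iUnion_subset fun p => Ioo_subset_Icc_self.trans (hI.out p.2.1 p.2.2)),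
        measure_empty]
    refine Set.Countable.measure_zero ((countable_setOf_forall_notMem_Ioo I).mono fun x hx => ?_) _
    refine ⟨hx.1, fun p hp q hq hpq => hx.2 ?_⟩
    obtain ⟨p', hpp', hp'x⟩ := exists_rat_btwn hpq.1
    obtain ⟨q', hxq', hq'q⟩ := exists_rat_btwn hpq.2
    exact mem_iUnion.2 ⟨⟨(p', q'), hI.out hp hq ⟨hpp'.le, (hp'x.trans hpq.2).le⟩,
      hI.out hp hq ⟨(hpq.1.trans hxq').le, hq'q.le⟩⟩, hp'x, hxq'⟩
  rw [← Measure.restrict_congr_set (hac.ae_eq hΩ),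
    ← Measure.restrict_congr_set ((withDensity_absolutelyContinuous _ _).ae_eq hΩ)]
  exact Measure.restrict_iUnion_congr.2 fun p =>
    hν.restrict_Ioo_absolutelyContinuousPart hI hγ hdecomp hac hsing hDmeas hD p.2.1 p.2.2

theorem measure_eq_setLIntegral_add {J : Set ℝ} (hJI : J ⊆ I) (hJ : MeasurableSet J) :
    ν J = (∫⁻ t in J, ENNReal.ofReal (D t)) + νsing J := by
  rw [hdecomp, Measure.add_apply, ← Measure.restrict_eq_self νac hJI,
    hν.restrict_absolutelyContinuousPart hI hγ hdecomp hac hsing hDmeas hD,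
    Measure.restrict_eq_self _ hJI, withDensity_apply _ hJ]

end IsSpeedMeasure

/-- With `ν = ν_ac + ν_sing` the Lebesgue decomposition of the speed
measure and `D = |γ̇|` the metric derivative (defined a.e. on `I`), for every
subinterval `J ⊆ I` one has `Var(γ;J) ≤ ∫_J |γ̇| dλ + ν_sing(J)`, with equality if every
point of `J` not in the relative interior of `J` is a continuity point of `γ`;
in particular equality holds for all subintervals when `γ` is continuous. -/
theorem variation_integral_formula {X : Type*} [MetricSpace X]
    (I : Set ℝ) (hI : I.OrdConnected) (γ : ℝ → X)
    (hγ : ∀ a ∈ I, ∀ b ∈ I, a ≤ b → eVariationOn γ (Set.Icc a b) < ⊤)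
    (ν νac νsing : Measure ℝ) (hν : IsSpeedMeasure γ I ν)
    (hdecomp : ν = νac + νsing)
    (hac : νac ≪ volume) (hsing : νsing ⟂ₘ volume)
    (D : ℝ → ℝ) (hDmeas : Measurable D)
    (hD : ∀ᵐ t ∂(volume.restrict I),
      Tendsto (fun s => dist (γ s) (γ t) / |s - t|) (𝓝[I \ {t}] t) (𝓝 (D t))) :
    (∀ J : Set ℝ, J ⊆ I → J.OrdConnected →
      eVariationOn γ J ≤ (∫⁻ t in J, ENNReal.ofReal (D t)) + νsing J ∧
      ((∀ t ∈ J, (¬ ∃ U : Set ℝ, IsOpen U ∧ t ∈ U ∧ U ∩ I ⊆ J) →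
          ContinuousWithinAt γ I t) →
        eVariationOn γ J = (∫⁻ t in J, ENNReal.ofReal (D t)) + νsing J)) ∧
    (ContinuousOn γ I → ∀ J : Set ℝ, J ⊆ I → J.OrdConnected →
      eVariationOn γ J = (∫⁻ t in J, ENNReal.ofReal (D t)) + νsing J) := by
  have main : ∀ J : Set ℝ, J ⊆ I → J.OrdConnected →
      eVariationOn γ J ≤ (∫⁻ t in J, ENNReal.ofReal (D t)) + νsing J ∧
      ((∀ t ∈ J, (¬ ∃ U : Set ℝ, IsOpen U ∧ t ∈ U ∧ U ∩ I ⊆ J) →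
          ContinuousWithinAt γ I t) →
        eVariationOn γ J = (∫⁻ t in J, ENNReal.ofReal (D t)) + νsing J) := fun J hJI hJ => by
    rw [← hν.measure_eq_setLIntegral_add hI hγ hdecomp hac hsing hDmeas hD hJI hJ.measurableSet]
    exact ⟨hν.eVariationOn_le hI hγ hJI hJ, fun hJc =>
      le_antisymm (hν.eVariationOn_le hI hγ hJI hJ) (hν.measure_le_eVariationOn hI hγ hJI hJ hJc)⟩
  exact ⟨main, fun hcont J hJI hJ => (main J hJI hJ).2 fun t ht _ => hcont t (hJI ht)⟩
end
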